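/- arXiv:2302.13665 — 4 statements merged into one kernel-verified Lean document; each statement's English description precedes it below -/
import Mathlib

section
/- Let X be a bounded real-valued random variable with a ≤ X ≤ b almost surely, mean μ and variance σ². Then σ² ≤ (b − μ)(μ − a). -/
open MeasureTheory ProbabilityTheory

/-- Bhatia–Davis inequality. -/
theorem bhatia_davis {Ω : Type*} [MeasurableSpace Ω] (P : Measure Ω)
    [IsProbabilityMeasure P] (X : Ω → ℝ) (hX : AEMeasurable X P)
    (a b μ σ : ℝ) (hab : ∀ᵐ ω ∂P, a ≤ X ω ∧ X ω ≤ b)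
    (hμ : μ = ∫ ω, X ω ∂P) (hσ : σ ^ 2 = variance X P) :
    σ ^ 2 ≤ (b - μ) * (μ - a) := by
  rw [hσ, hμ]
  exact variance_le_sub_mul_sub hab hX
end

section
/- Let γ₁, …, γ_N ∈ (0, π) and suppose there exist integers k₁, …, k_N with ∑ kᵢγᵢ ≡ 0 (mod 2π) and ∑ kᵢ odd. Then for every integer ℓ, max over 1 ≤ i ≤ N of the distance from ℓγᵢ to π modulo 2π is at least π / (∑ |kᵢ|). -/
/-!
Choose for each `i` an odd multiple `(2 nᵢ + 1) π` nearest to `ℓ γᵢ` and put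
`eᵢ = ℓ γᵢ - (2 nᵢ + 1) π`. The relation gives `∑ kᵢ eᵢ = π (2 M ℓ - ∑ kᵢ (2 nᵢ + 1))`, and the
integer in parentheses is odd because `∑ kᵢ` is. Hence
`π ≤ |∑ kᵢ eᵢ| ≤ (∑ |kᵢ|) maxᵢ |eᵢ|`.
-/

open Real Finset

lemma exists_abs_sub_odd_mul_pi_le_iInf (x : ℝ) :
    ∃ n : ℤ, |x - (2 * n + 1) * π| ≤ ⨅ m : ℤ, |x - (2 * (m : ℝ) + 1) * π| := by
  have h2π : 0 < 2 * π := by positivity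
  have scale : ∀ m : ℤ, |x - (2 * m + 1) * π| = 2 * π * |(x - π) / (2 * π) - m| := by
    intro m
    rw [← abs_of_pos h2π, ← abs_mul, abs_of_pos h2π]
    congr 1
    field_simp
    ring
  refine ⟨round ((x - π) / (2 * π)), le_ciInf fun m => ?_⟩
  rw [scale, scale]
  exact mul_le_mul_of_nonneg_left (round_le _ m) h2π.le

lemma Int.odd_sum_mul_two_mul_add_one {ι : Type*} (s : Finset ι) (k n : ι → ℤ)
    (hodd : Odd (∑ i ∈ s, k i)) : Odd (∑ i ∈ s, k i * (2 * n i + 1)) := by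
  have : ∑ i ∈ s, k i * (2 * n i + 1) = ∑ i ∈ s, k i + 2 * ∑ i ∈ s, k i * n i := by
    rw [mul_sum, ← sum_add_distrib]
    exact sum_congr rfl fun i _ => by ring
  rw [this]
  exact hodd.add_even (even_two_mul _)

lemma pi_le_abs_sum_mul_sub_odd_mul_pi {ι : Type*} (s : Finset ι) (γ : ι → ℝ) (k n : ι → ℤ)
    (M ℓ : ℤ) (hrel : ∑ i ∈ s, (k i : ℝ) * γ i = 2 * π * M) (hodd : Odd (∑ i ∈ s, k i)) :
    π ≤ |∑ i ∈ s, (k i : ℝ) * (ℓ * γ i - (2 * n i + 1) * π)| := by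
  set S := ∑ i ∈ s, k i * (2 * n i + 1)
  have hsum : ∑ i ∈ s, (k i : ℝ) * (ℓ * γ i - (2 * n i + 1) * π) = π * ((2 * M * ℓ - S : ℤ) : ℝ) := by
    have split : ∀ i ∈ s, (k i : ℝ) * (ℓ * γ i - (2 * n i + 1) * π)
        = ℓ * (k i * γ i) - π * ((k i * (2 * n i + 1) : ℤ) : ℝ) := by
      intro i _; push_cast; ring
    rw [sum_congr rfl split, sum_sub_distrib, ← mul_sum, ← mul_sum, hrel, ← Int.cast_sum]
    push_cast [S]
    ring
  have hT : Odd (2 * M * ℓ - S) :=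
    Even.sub_odd ⟨M * ℓ, by ring⟩ (Int.odd_sum_mul_two_mul_add_one s k n hodd)
  have hT1 : (1 : ℝ) ≤ |((2 * M * ℓ - S : ℤ) : ℝ)| := by
    rw [← Int.cast_abs]
    exact_mod_cast Int.one_le_abs (by rintro h; simp [h] at hT)
  rw [hsum, abs_mul, abs_of_pos pi_pos]
  nlinarith [pi_pos]

theorem max_dist_to_pi_lower_bound_general {N : ℕ} (γ : Fin N → ℝ)
    (k : Fin N → ℤ) (M : ℤ)
    (hrel : ∑ i, (k i : ℝ) * γ i = 2 * π * M) (hodd : Odd (∑ i, k i))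
    (ℓ : ℤ) :
    π / (∑ i, |(k i : ℝ)|) ≤
      ⨆ i, ⨅ n : ℤ, |(ℓ : ℝ) * γ i - (2 * (n : ℝ) + 1) * π| := by
  set d : Fin N → ℝ := fun i => ⨅ n : ℤ, |(ℓ : ℝ) * γ i - (2 * (n : ℝ) + 1) * π|
  set D := ⨆ i, d i
  choose n hn using fun i => exists_abs_sub_odd_mul_pi_le_iInf (ℓ * γ i)
  have hnD : ∀ i, |(ℓ : ℝ) * γ i - (2 * n i + 1) * π| ≤ D :=
    fun i => (hn i).trans (le_ciSup (Finite.bddAbove_range d) i)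
  have key : π ≤ (∑ i, |(k i : ℝ)|) * D :=
    calc π ≤ |∑ i, (k i : ℝ) * (ℓ * γ i - (2 * n i + 1) * π)| :=
          pi_le_abs_sum_mul_sub_odd_mul_pi _ γ k n M ℓ hrel hodd
      _ ≤ ∑ i, |(k i : ℝ)| * |ℓ * γ i - (2 * n i + 1) * π| :=
          (abs_sum_le_sum_abs _ _).trans_eq (by simp only [abs_mul])
      _ ≤ ∑ i, |(k i : ℝ)| * D :=
          sum_le_sum fun i _ => mul_le_mul_of_nonneg_left (hnD i) (abs_nonneg _)
      _ = (∑ i, |(k i : ℝ)|) * D := (sum_mul ..).symm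
  have hK : 0 < ∑ i, |(k i : ℝ)| := by
    refine (sum_nonneg fun i _ => abs_nonneg _).lt_of_ne fun h => ?_
    rw [← h, zero_mul] at key
    exact pi_pos.not_ge key
  rw [div_le_iff₀ hK]
  linarith

/-- If `∑ kᵢ γᵢ ≡ 0 (mod 2π)` with `∑ kᵢ` odd, then for every integer `ℓ` the
largest distance of the `ℓ γᵢ` to the odd multiples of `π` is at least
`π / ∑ |kᵢ|`. -/
theorem max_dist_to_pi_lower_bound {N : ℕ} (hN : 0 < N) (γ : Fin N → ℝ)
    (hγ : ∀ i, γ i ∈ Set.Ioo 0 π) (k : Fin N → ℤ) (M : ℤ)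
    (hrel : ∑ i, (k i : ℝ) * γ i = 2 * π * M) (hodd : Odd (∑ i, k i))
    (ℓ : ℤ) :
    π / (∑ i, |(k i : ℝ)|) ≤
      ⨆ i, ⨅ n : ℤ, |(ℓ : ℝ) * γ i - (2 * (n : ℝ) + 1) * π| :=
  max_dist_to_pi_lower_bound_general γ k M hrel hodd ℓ
end

section
/- Let γ₁, …, γ_N ∈ (0, π) and suppose there exist integers k₁, …, k_N with ∑ kᵢγᵢ ≡ 0 (mod 2π) and ∑ kᵢ odd. Set κ = ∑ |kᵢ|. Then for every integer ℓ, ∑_{i=1}^N cos(ℓγᵢ) ≥ −N + 1 + cos(π(1 − 1/κ)). -/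
open Real

/-! Put `δ = π / κ`. If every `cos (ℓ γᵢ)` were below `cos (π - δ) = -cos δ`, then each `ℓ γᵢ`
would lie within `δ` of an odd multiple `nᵢ π` of `π`. The errors `ℓ γᵢ - nᵢ π`, weighted by `kᵢ`,
sum to `π (2 ℓ M - ∑ kᵢ nᵢ)`, an odd multiple of `π` because `∑ kᵢ` is odd; yet this weighted sum
has absolute value `< κ δ = π`. So one cosine is at least `-cos δ`, and the other `N - 1` are at
least `-1`. -/

open Finset

lemma exists_odd_abs_sub_mul_pi_le (x : ℝ) : ∃ n : ℤ, Odd n ∧ |x - n * π| ≤ π := by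
  have hmem := toIocMod_mem_Ioc two_pi_pos (-π) (x - π)
  have hdiv := self_sub_toIocMod_eq_mul two_pi_pos (-π) (x - π)
  refine ⟨2 * toIocDiv two_pi_pos (-π) (x - π) + 1, odd_two_mul_add_one _, ?_⟩
  rw [abs_le]
  push_cast
  constructor <;> linarith [hmem.1, hmem.2]

lemma exists_odd_abs_sub_mul_pi_lt_of_cos_lt {x δ : ℝ} (hδ : 0 ≤ δ) (h : cos x < -cos δ) :
    ∃ n : ℤ, Odd n ∧ |x - n * π| < δ := by
  obtain ⟨n, hn, hle⟩ := exists_odd_abs_sub_mul_pi_le x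
  refine ⟨n, hn, lt_of_not_ge fun hge => h.not_ge ?_⟩
  have hcos : cos x = -cos (x - n * π) := by
    rw [cos_sub_int_mul_pi, hn.neg_one_zpow]
    ring
  rw [hcos, ← cos_abs (x - n * π)]
  exact neg_le_neg (cos_le_cos_of_nonneg_of_le_pi hδ hle hge)

lemma Int.odd_sum_mul_of_odd {ι : Type*} {s : Finset ι} {k n : ι → ℤ}
    (hk : Odd (∑ i ∈ s, k i)) (hn : ∀ i ∈ s, Odd (n i)) : Odd (∑ i ∈ s, k i * n i) := by
  have heven : Even (∑ i ∈ s, k i * (n i - 1)) :=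
    even_sum _ fun i hi => ((hn i hi).sub_odd odd_one).mul_left _
  have hsplit : ∑ i ∈ s, k i * n i = ∑ i ∈ s, k i * (n i - 1) + ∑ i ∈ s, k i := by
    rw [← sum_add_distrib]
    exact sum_congr rfl fun i _ => by ring
  rw [hsplit]
  exact heven.add_odd hk

lemma Int.ne_zero_of_odd {n : ℤ} (hn : Odd n) : n ≠ 0 := by
  rintro rfl
  exact Int.not_odd_zero hn

lemma pi_le_abs_pi_mul_of_odd {n : ℤ} (hn : Odd n) : π ≤ |π * n| := by
  have h1 : (1 : ℝ) ≤ |(n : ℝ)| := by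
    rw [← Int.cast_abs]
    exact_mod_cast Int.one_le_abs (Int.ne_zero_of_odd hn)
  rw [abs_mul, abs_of_pos pi_pos]
  nlinarith [pi_pos]

lemma abs_sum_mul_lt_of_abs_lt {ι : Type*} {s : Finset ι} {w e : ι → ℝ} {c : ℝ}
    (hw : ∃ i ∈ s, w i ≠ 0) (he : ∀ i ∈ s, |e i| < c) :
    |∑ i ∈ s, w i * e i| < c * ∑ i ∈ s, |w i| := by
  obtain ⟨i₀, hi₀, hwi₀⟩ := hw
  calc |∑ i ∈ s, w i * e i| ≤ ∑ i ∈ s, |w i| * |e i| := by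
        simpa only [abs_mul] using abs_sum_le_sum_abs (fun i => w i * e i) s
    _ < ∑ i ∈ s, |w i| * c :=
        sum_lt_sum (fun i hi => mul_le_mul_of_nonneg_left (he i hi).le (abs_nonneg _))
          ⟨i₀, hi₀, mul_lt_mul_of_pos_left (he i₀ hi₀) (abs_pos.2 hwi₀)⟩
    _ = c * ∑ i ∈ s, |w i| := by rw [← sum_mul, mul_comm]

theorem exists_neg_cos_le_cos_of_odd_sum {ι : Type*} [Fintype ι] (x : ι → ℝ) (k : ι → ℤ)
    (M : ℤ) (hrel : ∑ i, (k i : ℝ) * x i = 2 * π * M) (hodd : Odd (∑ i, k i)) :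
    ∃ i, -cos (π / ∑ i, |(k i : ℝ)|) ≤ cos (x i) := by
  set κ := ∑ i, |(k i : ℝ)|
  obtain ⟨i₀, -, hki₀⟩ := exists_ne_zero_of_sum_ne_zero (Int.ne_zero_of_odd hodd)
  have hκ : 0 < κ :=
    sum_pos' (fun i _ => abs_nonneg _) ⟨i₀, mem_univ _, abs_pos.2 (Int.cast_ne_zero.2 hki₀)⟩
  by_contra! hcos
  choose n hn hclose using fun i =>
    exists_odd_abs_sub_mul_pi_lt_of_cos_lt (div_pos pi_pos hκ).le (hcos i)
  have hJ : Odd (2 * M - ∑ i, k i * n i) :=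
    (even_two_mul M).sub_odd (Int.odd_sum_mul_of_odd hodd fun i _ => hn i)
  have hsum : ∑ i, (k i : ℝ) * (x i - n i * π) = π * (2 * M - ∑ i, k i * n i : ℤ) := by
    simp only [mul_sub, sum_sub_distrib, hrel]
    push_cast
    rw [mul_sub, mul_sum]
    exact congrArg₂ _ (by ring) (sum_congr rfl fun i _ => by ring)
  have hlt := abs_sum_mul_lt_of_abs_lt (w := fun i => (k i : ℝ))
    ⟨i₀, mem_univ _, Int.cast_ne_zero.2 hki₀⟩ fun i _ => hclose i
  rw [hsum, div_mul_cancel₀ _ hκ.ne'] at hlt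
  exact hlt.not_ge (pi_le_abs_pi_mul_of_odd hJ)

lemma neg_card_add_one_add_le_sum {ι : Type*} [Fintype ι] {f : ι → ℝ} {a : ℝ}
    (hf : ∀ j, -1 ≤ f j) (i : ι) (hi : a ≤ f i) : -(Fintype.card ι : ℝ) + 1 + a ≤ ∑ j, f j := by
  have h := single_le_sum (f := fun j => f j + 1) (fun j _ => by linarith [hf j]) (mem_univ i)
  rw [sum_add_distrib, sum_const, card_univ, nsmul_one] at h
  linarith

theorem sum_cos_lower_bound_general {N : ℕ} (γ : Fin N → ℝ)
    (k : Fin N → ℤ) (M : ℤ)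
    (hrel : ∑ i, (k i : ℝ) * γ i = 2 * π * M) (hodd : Odd (∑ i, k i))
    (κ : ℝ) (hκ : κ = ∑ i, |(k i : ℝ)|) (ℓ : ℤ) :
    -(N : ℝ) + 1 + Real.cos (π * (1 - 1 / κ)) ≤ ∑ i, Real.cos (ℓ * γ i) := by
  have hrelℓ : ∑ i, (k i : ℝ) * (ℓ * γ i) = 2 * π * (ℓ * M : ℤ) := by
    rw [Int.cast_mul, mul_left_comm, ← hrel, mul_sum]
    exact sum_congr rfl fun i _ => by ring
  obtain ⟨i, hi⟩ := exists_neg_cos_le_cos_of_odd_sum (fun i => ℓ * γ i) k (ℓ * M) hrelℓ hodd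
  have hcos : cos (π * (1 - 1 / κ)) = -cos (π / κ) := by
    rw [← cos_pi_sub]
    ring_nf
  have h := neg_card_add_one_add_le_sum (f := fun j => cos (ℓ * γ j))
    (fun j => neg_one_le_cos _) i hi
  rwa [Fintype.card_fin, ← hκ, ← hcos] at h

/-- If `∑ kᵢ γᵢ ≡ 0 (mod 2π)` with `∑ kᵢ` odd and `κ = ∑ |kᵢ|`, then for every
integer `ℓ` we have `∑ cos(ℓ γᵢ) ≥ -N + 1 + cos(π (1 - 1/κ))`. -/
theorem sum_cos_lower_bound {N : ℕ} (hN : 0 < N) (γ : Fin N → ℝ)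
    (hγ : ∀ i, γ i ∈ Set.Ioo 0 π) (k : Fin N → ℤ) (M : ℤ)
    (hrel : ∑ i, (k i : ℝ) * γ i = 2 * π * M) (hodd : Odd (∑ i, k i))
    (κ : ℝ) (hκ : κ = ∑ i, |(k i : ℝ)|) (ℓ : ℤ) :
    -(N : ℝ) + 1 + Real.cos (π * (1 - 1 / κ)) ≤ ∑ i, Real.cos (ℓ * γ i) :=
  sum_cos_lower_bound_general γ k M hrel hodd κ hκ ℓ
end

section
/- Let α₁, …, α_g be nonzero complex numbers and q > 0 real such that each α_i/√q is not a root of unity. Suppose for each i ∈ {1,…,g} there exist integers k_{i,1}, …, k_{i,g} with k_{i,i} ≠ 0 and ∏_j (α_j/√q)^{k_{i,j}} = 1. Then there exist nonzero integers S₁, …, S_g with ∏_j (α_j/√q)^{S_j} = 1. -/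
/-- From multiplicative relations each with nonzero `i`-th exponent, one can
combine them into a single relation with all exponents nonzero. -/
theorem exists_relation_all_exponents_nonzero {g : ℕ} (α : Fin g → ℂ)
    (hα : ∀ i, α i ≠ 0) (q : ℝ) (hq : 0 < q)
    (hnru : ∀ i, ¬ ∃ n : ℕ, 0 < n ∧ (α i / (Real.sqrt q : ℂ)) ^ n = 1)
    (hrel : ∀ i : Fin g, ∃ k : Fin g → ℤ, k i ≠ 0 ∧
      ∏ j, (α j / (Real.sqrt q : ℂ)) ^ (k j) = 1) :
    ∃ S : Fin g → ℤ, (∀ j, S j ≠ 0) ∧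
      ∏ j, (α j / (Real.sqrt q : ℂ)) ^ (S j) = 1 := by
  set β : Fin g → ℂ := fun j => α j / (Real.sqrt q : ℂ) with hβ
  have hβne : ∀ j, β j ≠ 0 := by
    intro j
    apply div_ne_zero (hα j)
    simpa using (Real.sqrt_pos.mpr hq).ne'
  suffices h : ∀ m : ℕ, ∃ S : Fin g → ℤ, (∀ j : Fin g, (j : ℕ) < m → S j ≠ 0) ∧
      ∏ j, β j ^ (S j) = 1 by
    obtain ⟨S, h1, h2⟩ := h g
    exact ⟨S, fun j => h1 j j.isLt, h2⟩
  intro m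
  induction m with
  | zero => exact ⟨fun _ => 0, fun j hj => absurd hj (Nat.not_lt_zero _), by simp⟩
  | succ m ih =>
    obtain ⟨S, hS1, hS2⟩ := ih
    by_cases hm : m < g
    · set i : Fin g := ⟨m, hm⟩ with hi
      by_cases hSi : S i ≠ 0
      · refine ⟨S, fun j hj => ?_, hS2⟩
        rcases Nat.lt_succ_iff_lt_or_eq.mp hj with h | h
        · exact hS1 j h
        · have hj' : j = i := Fin.ext h
          rw [hj']; exact hSi
      · push_neg at hSi
        obtain ⟨k, hki, hkprod⟩ := hrel i
        set B : ℕ := Finset.univ.sup (fun j => (S j).natAbs) with hB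
        set M : ℕ := B + 1 with hM
        refine ⟨fun j => S j + (M : ℤ) * k j, ?_, ?_⟩
        · intro j hj
          by_cases hkj : k j = 0
          · simp only [hkj, mul_zero, add_zero]
            rcases Nat.lt_succ_iff_lt_or_eq.mp hj with h | h
            · exact hS1 j h
            · exfalso
              have hj' : j = i := Fin.ext h
              rw [hj'] at hkj
              exact hki hkj
          · intro hcon
            have h1 : (S j).natAbs ≤ B := Finset.le_sup (f := fun j => (S j).natAbs) (Finset.mem_univ j)
            have h2 : (1 : ℤ) ≤ |k j| := by
              rcases lt_or_gt_of_ne hkj with h | h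
              · rw [abs_of_neg h]; omega
              · rw [abs_of_pos h]; omega
            have h3 : |S j| ≤ (B : ℤ) := by
              rw [Int.abs_eq_natAbs]
              exact_mod_cast h1
            have h4 : S j = -((M : ℤ) * k j) := by linarith [hcon.symm ▸ (le_refl (0:ℤ)), add_eq_zero_iff_eq_neg.mp hcon]
            have h5 : |S j| = (M : ℤ) * |k j| := by
              rw [h4, abs_neg, abs_mul, abs_of_nonneg (by positivity : (0:ℤ) ≤ (M:ℤ))]
            have h6 : (M : ℤ) ≤ (M : ℤ) * |k j| :=
              le_mul_of_one_le_right (by positivity) h2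
            have : (M : ℤ) ≤ (B : ℤ) := by
              calc (M : ℤ) ≤ (M : ℤ) * |k j| := h6
                _ = |S j| := h5.symm
                _ ≤ (B : ℤ) := h3
            omega
        · have hsplit : ∀ j ∈ Finset.univ, β j ^ (S j + (M : ℤ) * k j)
              = β j ^ S j * (β j ^ k j) ^ M := by
            intro j _
            rw [zpow_add₀ (hβne j), mul_comm (M : ℤ) (k j), zpow_mul, zpow_natCast]
          rw [Finset.prod_congr rfl hsplit, Finset.prod_mul_distrib, hS2,
            Finset.prod_pow, hkprod, one_pow, one_mul]
    · refine ⟨S, fun j hj => ?_, hS2⟩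
      exact hS1 j (by omega : (j : ℕ) < m)
end
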